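/- arXiv:2401.02209 — 4 statements merged into one kernel-verified Lean document; each statement's English description precedes it below -/
import Mathlib

section
/- Let V be a 2-dimensional real inner product space with unit circle S(V), and let f₁ : S(V) → ℝ be continuous with f₁(−v) = −f₁(v) for all v. Set Ω = { v ∈ S(V) : |f₁(v)| < 1 }. If there exists v₀ ∈ S(V) with f₁(v₀) > 1, then Ω can be written as a disjoint union Ω = Ω₊ ⊔ Ω₋ of two open subsets of S(V) with Ω₋ = −Ω₊. -/
open Metric
open scoped RealInnerProductSpace

lemma sphere_sum_sq {v : EuclideanSpace ℝ (Fin 2)}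
    (hv : v ∈ sphere (0 : EuclideanSpace ℝ (Fin 2)) 1) :
    (v 0)^2 + (v 1)^2 = 1 := by
  have h : ‖v‖ = 1 := by simpa using hv
  have := EuclideanSpace.norm_eq v
  rw [h] at this
  have h2 : (1:ℝ)^2 = (Real.sqrt (∑ i, ‖v i‖^2))^2 := by rw [this]
  rw [Real.sq_sqrt (by positivity)] at h2
  simpa [Fin.sum_univ_two, Real.norm_eq_abs, sq_abs] using h2.symm

lemma line_zero {a b x y : ℝ} (hab : a^2 + b^2 = 1) (hxy : x^2 + y^2 = 1)
    (h : -b * x + a * y = 0) : (x = a ∧ y = b) ∨ (x = -a ∧ y = -b) := by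
  have hay : a * y = b * x := by linarith
  have hx : x = (a*x + b*y) * a := by linear_combination (-x) * hab + (-b) * hay
  have hy : y = (a*x + b*y) * b := by linear_combination a * hay - y * hab
  set t := a*x + b*y with ht
  have ht2 : t^2 = 1 := by
    calc t^2 = t^2 * (a^2 + b^2) := by rw [hab]; ring
    _ = x^2 + y^2 := by rw [hx, hy]; ring
    _ = 1 := hxy
  have : (t - 1) * (t + 1) = 0 := by nlinarith
  rcases mul_eq_zero.mp this with h1 | h1
  · left; constructor <;> [rw [hx]; rw [hy]] <;> nlinarith
  · right; constructor <;> [rw [hx]; rw [hy]] <;> nlinarith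

theorem circle_omega_splits (f₁ : sphere (0 : EuclideanSpace ℝ (Fin 2)) 1 → ℝ)
    (hf_cont : Continuous f₁)
    (hf_odd : ∀ v, f₁ (-v) = -(f₁ v))
    (v₀ : sphere (0 : EuclideanSpace ℝ (Fin 2)) 1) (hv₀ : 1 < f₁ v₀) :
    ∃ Ωp Ωn : Set (sphere (0 : EuclideanSpace ℝ (Fin 2)) 1),
      IsOpen Ωp ∧ IsOpen Ωn ∧ Disjoint Ωp Ωn ∧
      Ωp ∪ Ωn = {v : sphere (0 : EuclideanSpace ℝ (Fin 2)) 1 | |f₁ v| < 1} ∧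
      Ωn = (fun v => -v) '' Ωp := by
  set V := EuclideanSpace ℝ (Fin 2)
  set a : ℝ := (v₀ : V) 0 with ha
  set b : ℝ := (v₀ : V) 1 with hb
  set L : V → ℝ := fun w => -b * w 0 + a * w 1 with hL
  have hLc : Continuous L := by
    apply Continuous.add
    · exact continuous_const.mul ((EuclideanSpace.proj (0 : Fin 2)).continuous)
    · exact continuous_const.mul ((EuclideanSpace.proj (1 : Fin 2)).continuous)
  have hcoe : ∀ v : sphere (0 : V) 1, ((-v : sphere (0 : V) 1) : V) = -(v : V) := by
    intro v; rfl
  have hLneg : ∀ w : V, L (-w) = -L w := by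
    intro w
    have h0 : (-w) 0 = -(w 0) := rfl
    have h1 : (-w) 1 = -(w 1) := rfl
    simp only [hL, h0, h1]; ring
  have hL0 : ∀ v : sphere (0 : V) 1, L (v : V) = 0 → v = v₀ ∨ v = -v₀ := by
    intro v hv
    have hab : a^2 + b^2 = 1 := sphere_sum_sq v₀.2
    have hxy : ((v : V) 0)^2 + ((v : V) 1)^2 = 1 := sphere_sum_sq v.2
    rcases line_zero hab hxy hv with ⟨h1, h2⟩ | ⟨h1, h2⟩
    · left
      apply Subtype.ext
      ext i
      fin_cases i <;> assumption
    · right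
      apply Subtype.ext
      rw [hcoe]
      ext i
      fin_cases i <;> simpa
  refine ⟨{v | |f₁ v| < 1 ∧ 0 < L (v : V)}, {v | |f₁ v| < 1 ∧ L (v : V) < 0},
    ?_, ?_, ?_, ?_, ?_⟩
  · exact (isOpen_lt (continuous_abs.comp hf_cont) continuous_const).inter
      (isOpen_lt continuous_const (hLc.comp continuous_subtype_val))
  · exact (isOpen_lt (continuous_abs.comp hf_cont) continuous_const).inter
      (isOpen_lt (hLc.comp continuous_subtype_val) continuous_const)
  · rw [Set.disjoint_left]
    rintro v ⟨-, h1⟩ ⟨-, h2⟩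
    exact absurd h1 (not_lt.mpr h2.le)
  · ext v
    simp only [Set.mem_union, Set.mem_setOf_eq]
    constructor
    · rintro (⟨h, -⟩ | ⟨h, -⟩) <;> exact h
    · intro h
      rcases lt_trichotomy (L (v : V)) 0 with hlt | heq | hgt
      · exact Or.inr ⟨h, hlt⟩
      · exfalso
        rcases hL0 v heq with rfl | rfl
        · exact absurd h (not_lt.mpr (le_abs_self _ |>.trans' hv₀.le))
        · rw [hf_odd, abs_neg] at h
          exact absurd h (not_lt.mpr (le_abs_self _ |>.trans' hv₀.le))
      · exact Or.inl ⟨h, hgt⟩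
  · ext v
    simp only [Set.mem_setOf_eq, Set.mem_image]
    constructor
    · rintro ⟨h1, h2⟩
      refine ⟨-v, ⟨?_, ?_⟩, neg_neg v⟩
      · rw [hf_odd, abs_neg]; exact h1
      · rw [hcoe, hLneg]; linarith
    · rintro ⟨u, ⟨h1, h2⟩, rfl⟩
      constructor
      · rw [hf_odd, abs_neg]; exact h1
      · rw [hcoe, hLneg]; linarith
end

section
/- Let m ≥ 1, let V = ℝ^{m+1} with its standard inner product and unit sphere S(V), and let f₁, …, f_m : S(V) → ℝ be continuous functions with fᵢ(−v) = −fᵢ(v) for all v ∈ S(V). Set Ω = { v ∈ S(V) : |fᵢ(v)| < 1 for all i }. Suppose there exists a linear subspace U ⊆ V of dimension m (a hyperplane through the origin) such that for every unit vector u ∈ U there is some i with |fᵢ(u)| ≥ 1. Then Ω can be written as a disjoint union Ω = Ω₊ ⊔ Ω₋ of two open subsets of S(V) with Ω₋ = −Ω₊; indeed, for any unit vector w in the orthogonal complement of U, the sets Ω₊ = { v ∈ Ω : ⟨v, w⟩ > 0 } and Ω₋ = { v ∈ Ω : ⟨v, w⟩ < 0 } have these properties. -/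
/-!
An odd function `g` on a space with an involution that does not vanish on an open invariant set `Ω`
splits `Ω` into the open sets `{g > 0}` and `{g < 0}`, which the involution exchanges. Here
`g v = ⟪v, w⟫` for a unit normal `w` of `U`: it vanishes on `S(V)` exactly at the unit vectors of `U`,
and these lie outside `Ω` by hypothesis.
-/

open Metric Module
open scoped RealInnerProductSpace Pointwise

section AntipodalSplitting

variable {X : Type*} [TopologicalSpace X] [InvolutiveNeg X]

def IsAntipodalSplitting (Ω Ωp Ωn : Set X) : Prop :=
  IsOpen Ωp ∧ IsOpen Ωn ∧ Disjoint Ωp Ωn ∧ Ωp ∪ Ωn = Ω ∧ Ωn = (fun x => -x) '' Ωp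

theorem isAntipodalSplitting_of_odd {Ω : Set X} {g : X → ℝ} (hΩ : IsOpen Ω)
    (hΩ_neg : ∀ x ∈ Ω, -x ∈ Ω) (hg : Continuous g) (hg_odd : ∀ x, g (-x) = -g x)
    (hg_ne : ∀ x ∈ Ω, g x ≠ 0) :
    IsAntipodalSplitting Ω {x | x ∈ Ω ∧ 0 < g x} {x | x ∈ Ω ∧ g x < 0} := by
  refine ⟨hΩ.inter (isOpen_lt continuous_const hg), hΩ.inter (isOpen_lt hg continuous_const),
    Set.disjoint_left.2 fun x hp hn => lt_asymm hp.2 hn.2, ?_, ?_⟩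
  · ext x
    refine ⟨fun h => h.elim And.left And.left, fun hx => ?_⟩
    exact (hg_ne x hx).lt_or_gt.symm.imp (⟨hx, ·⟩) (⟨hx, ·⟩)
  · have hΩ_neg_iff : ∀ x, -x ∈ Ω ↔ x ∈ Ω :=
      fun x => ⟨fun h => neg_neg x ▸ hΩ_neg _ h, hΩ_neg x⟩
    ext x
    simp only [Set.image_neg_eq_neg, Set.mem_neg, Set.mem_ofPred_eq, hΩ_neg_iff, hg_odd, neg_pos]

end AntipodalSplitting

namespace Submodule

variable {𝕜 E : Type*} [RCLike 𝕜] [NormedAddCommGroup E] [InnerProductSpace 𝕜 E]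

theorem exists_norm_eq_one_mem {K : Submodule 𝕜 E} (hK : K ≠ ⊥) : ∃ w ∈ K, ‖w‖ = 1 := by
  obtain ⟨x, hx, hx0⟩ := exists_mem_ne_zero_of_ne_bot hK
  exact ⟨(‖x‖⁻¹ : 𝕜) • x, K.smul_mem _ hx, norm_smul_inv_norm hx0⟩

theorem mem_of_inner_eq_zero_of_finrank_orthogonal_eq_one [FiniteDimensional 𝕜 E]
    {K : Submodule 𝕜 E} (hK : finrank 𝕜 Kᗮ = 1) {w v : E} (hw : w ∈ Kᗮ) (hw0 : w ≠ 0)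
    (hv : inner 𝕜 v w = 0) : v ∈ K := by
  have hspan : (𝕜 ∙ w) = Kᗮ :=
    eq_of_le_of_finrank_eq ((span_singleton_le_iff_mem _ _).2 hw)
      (by rw [finrank_span_singleton hw0, hK])
  rw [← K.orthogonal_orthogonal, ← hspan]
  exact mem_orthogonal_singleton_iff_inner_left.2 hv

end Submodule

theorem omega_splits_of_hyperplane_general (m : ℕ)
    (f : Fin m → sphere (0 : EuclideanSpace ℝ (Fin (m + 1))) 1 → ℝ)
    (hf_cont : ∀ i, Continuous (f i))
    (hf_odd : ∀ i v, f i (-v) = -(f i v))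
    (U : Submodule ℝ (EuclideanSpace ℝ (Fin (m + 1))))
    (hU : Module.finrank ℝ U = m)
    (hsep : ∀ (u : EuclideanSpace ℝ (Fin (m + 1))) (hu : u ∈ U) (hu1 : ‖u‖ = 1),
      ∃ i, 1 ≤ |f i ⟨u, mem_sphere_zero_iff_norm.mpr hu1⟩|) :
    (∃ Ωp Ωn : Set (sphere (0 : EuclideanSpace ℝ (Fin (m + 1))) 1),
      IsOpen Ωp ∧ IsOpen Ωn ∧ Disjoint Ωp Ωn ∧
      Ωp ∪ Ωn = {v : sphere (0 : EuclideanSpace ℝ (Fin (m + 1))) 1 | ∀ i, |f i v| < 1} ∧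
      Ωn = (fun v => -v) '' Ωp) ∧
    ∀ w : EuclideanSpace ℝ (Fin (m + 1)), w ∈ Uᗮ → ‖w‖ = 1 →
      (IsOpen {v : sphere (0 : EuclideanSpace ℝ (Fin (m + 1))) 1 |
          (∀ i, |f i v| < 1) ∧ 0 < ⟪(v : EuclideanSpace ℝ (Fin (m + 1))), w⟫} ∧
       IsOpen {v : sphere (0 : EuclideanSpace ℝ (Fin (m + 1))) 1 |
          (∀ i, |f i v| < 1) ∧ ⟪(v : EuclideanSpace ℝ (Fin (m + 1))), w⟫ < 0} ∧
       Disjoint {v : sphere (0 : EuclideanSpace ℝ (Fin (m + 1))) 1 |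
          (∀ i, |f i v| < 1) ∧ 0 < ⟪(v : EuclideanSpace ℝ (Fin (m + 1))), w⟫}
        {v : sphere (0 : EuclideanSpace ℝ (Fin (m + 1))) 1 |
          (∀ i, |f i v| < 1) ∧ ⟪(v : EuclideanSpace ℝ (Fin (m + 1))), w⟫ < 0} ∧
       {v : sphere (0 : EuclideanSpace ℝ (Fin (m + 1))) 1 |
          (∀ i, |f i v| < 1) ∧ 0 < ⟪(v : EuclideanSpace ℝ (Fin (m + 1))), w⟫} ∪
        {v : sphere (0 : EuclideanSpace ℝ (Fin (m + 1))) 1 |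
          (∀ i, |f i v| < 1) ∧ ⟪(v : EuclideanSpace ℝ (Fin (m + 1))), w⟫ < 0} =
        {v : sphere (0 : EuclideanSpace ℝ (Fin (m + 1))) 1 | ∀ i, |f i v| < 1} ∧
       {v : sphere (0 : EuclideanSpace ℝ (Fin (m + 1))) 1 |
          (∀ i, |f i v| < 1) ∧ ⟪(v : EuclideanSpace ℝ (Fin (m + 1))), w⟫ < 0} =
        (fun v => -v) '' {v : sphere (0 : EuclideanSpace ℝ (Fin (m + 1))) 1 |
          (∀ i, |f i v| < 1) ∧ 0 < ⟪(v : EuclideanSpace ℝ (Fin (m + 1))), w⟫}) := by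
  set V := EuclideanSpace ℝ (Fin (m + 1))
  set Ω : Set (sphere (0 : V) 1) := {v | ∀ i, |f i v| < 1}
  have hUperp : finrank ℝ Uᗮ = 1 := by
    have := U.finrank_add_finrank_orthogonal
    rw [hU, finrank_euclideanSpace_fin] at this
    omega
  have hΩ_open : IsOpen Ω := by
    simp only [Ω, Set.ofPred_forall]
    exact isOpen_iInter_of_finite fun i => isOpen_lt (hf_cont i).abs continuous_const
  have hΩ_neg : ∀ v ∈ Ω, -v ∈ Ω := fun v hv i => by
    rw [hf_odd, abs_neg]
    exact hv i
  have hsplit : ∀ w ∈ Uᗮ, ‖w‖ = 1 → IsAntipodalSplitting Ω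
      {v | v ∈ Ω ∧ 0 < ⟪(v : V), w⟫} {v | v ∈ Ω ∧ ⟪(v : V), w⟫ < 0} := by
    intro w hw hw1
    refine isAntipodalSplitting_of_odd hΩ_open hΩ_neg (by fun_prop)
      (fun v => inner_neg_left _ _) fun v hv hv0 => ?_
    have hw0 : w ≠ 0 := ne_zero_of_norm_ne_zero (hw1 ▸ one_ne_zero)
    obtain ⟨i, hi⟩ := hsep v (U.mem_of_inner_eq_zero_of_finrank_orthogonal_eq_one hUperp hw hw0 hv0)
      (mem_sphere_zero_iff_norm.mp v.2)
    exact (hv i).not_ge hi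
  obtain ⟨w, hw, hw1⟩ := Uᗮ.exists_norm_eq_one_mem fun h => by
    rw [h, finrank_bot] at hUperp
    exact zero_ne_one hUperp
  exact ⟨⟨_, _, hsplit w hw hw1⟩, hsplit⟩

theorem omega_splits_of_hyperplane (m : ℕ) (hm : 1 ≤ m)
    (f : Fin m → sphere (0 : EuclideanSpace ℝ (Fin (m + 1))) 1 → ℝ)
    (hf_cont : ∀ i, Continuous (f i))
    (hf_odd : ∀ i v, f i (-v) = -(f i v))
    (U : Submodule ℝ (EuclideanSpace ℝ (Fin (m + 1))))
    (hU : Module.finrank ℝ U = m)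
    (hsep : ∀ (u : EuclideanSpace ℝ (Fin (m + 1))) (hu : u ∈ U) (hu1 : ‖u‖ = 1),
      ∃ i, 1 ≤ |f i ⟨u, mem_sphere_zero_iff_norm.mpr hu1⟩|) :
    (∃ Ωp Ωn : Set (sphere (0 : EuclideanSpace ℝ (Fin (m + 1))) 1),
      IsOpen Ωp ∧ IsOpen Ωn ∧ Disjoint Ωp Ωn ∧
      Ωp ∪ Ωn = {v : sphere (0 : EuclideanSpace ℝ (Fin (m + 1))) 1 | ∀ i, |f i v| < 1} ∧
      Ωn = (fun v => -v) '' Ωp) ∧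
    ∀ w : EuclideanSpace ℝ (Fin (m + 1)), w ∈ Uᗮ → ‖w‖ = 1 →
      (IsOpen {v : sphere (0 : EuclideanSpace ℝ (Fin (m + 1))) 1 |
          (∀ i, |f i v| < 1) ∧ 0 < ⟪(v : EuclideanSpace ℝ (Fin (m + 1))), w⟫} ∧
       IsOpen {v : sphere (0 : EuclideanSpace ℝ (Fin (m + 1))) 1 |
          (∀ i, |f i v| < 1) ∧ ⟪(v : EuclideanSpace ℝ (Fin (m + 1))), w⟫ < 0} ∧
       Disjoint {v : sphere (0 : EuclideanSpace ℝ (Fin (m + 1))) 1 |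
          (∀ i, |f i v| < 1) ∧ 0 < ⟪(v : EuclideanSpace ℝ (Fin (m + 1))), w⟫}
        {v : sphere (0 : EuclideanSpace ℝ (Fin (m + 1))) 1 |
          (∀ i, |f i v| < 1) ∧ ⟪(v : EuclideanSpace ℝ (Fin (m + 1))), w⟫ < 0} ∧
       {v : sphere (0 : EuclideanSpace ℝ (Fin (m + 1))) 1 |
          (∀ i, |f i v| < 1) ∧ 0 < ⟪(v : EuclideanSpace ℝ (Fin (m + 1))), w⟫} ∪
        {v : sphere (0 : EuclideanSpace ℝ (Fin (m + 1))) 1 |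
          (∀ i, |f i v| < 1) ∧ ⟪(v : EuclideanSpace ℝ (Fin (m + 1))), w⟫ < 0} =
        {v : sphere (0 : EuclideanSpace ℝ (Fin (m + 1))) 1 | ∀ i, |f i v| < 1} ∧
       {v : sphere (0 : EuclideanSpace ℝ (Fin (m + 1))) 1 |
          (∀ i, |f i v| < 1) ∧ ⟪(v : EuclideanSpace ℝ (Fin (m + 1))), w⟫ < 0} =
        (fun v => -v) '' {v : sphere (0 : EuclideanSpace ℝ (Fin (m + 1))) 1 |
          (∀ i, |f i v| < 1) ∧ 0 < ⟪(v : EuclideanSpace ℝ (Fin (m + 1))), w⟫}) :=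
  omega_splits_of_hyperplane_general m f hf_cont hf_odd U hU hsep
end

section
/- Let V be a real inner product space and m ≥ 1. Suppose given unit vectors v_I ∈ V, one for each subset I ⊆ {1, …, m}, satisfying v_{I'} = −v_I, where I' denotes the complement of I in {1, …, m}. Suppose x₁, …, x_m ∈ V are vectors such that for every i and every subset I with i ∈ I one has ⟨xᵢ, v_I⟩ > 0. Then x₁, …, x_m are linearly independent. -/
/-! If `∑ gⱼ xⱼ = 0`, take a functional `f` that is positive on `xⱼ` exactly where `gⱼ > 0` and
negative elsewhere. Then every term of `0 = ∑ gⱼ f(xⱼ)` is nonnegative, hence zero, and since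
`f(xⱼ) ≠ 0` all coefficients vanish. For the theorem, `f = ⟪·, w I⟫` with `I = {j | 0 < gⱼ}`;
the relation `w Iᶜ = -w I` makes it negative off `I`. -/

open scoped RealInnerProductSpace

theorem LinearIndependent.of_forall_exists_sign_pattern {K M ι : Type*} [Fintype ι]
    [Field K] [LinearOrder K] [IsStrictOrderedRing K] [AddCommGroup M] [Module K M]
    (x : ι → M)
    (h : ∀ I : Finset ι, ∃ f : M →ₗ[K] K, (∀ i ∈ I, 0 < f (x i)) ∧ ∀ i ∉ I, f (x i) < 0) :
    LinearIndependent K x := by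
  classical
  rw [Fintype.linearIndependent_iff]
  intro g hg
  obtain ⟨f, hf_pos, hf_neg⟩ := h {j | 0 < g j}
  have hterm_nonneg : ∀ j, 0 ≤ g j * f (x j) := fun j => by
    by_cases hj : 0 < g j
    · exact (mul_pos hj (hf_pos j (by simpa using hj))).le
    · exact mul_nonneg_of_nonpos_of_nonpos (not_lt.mp hj) (hf_neg j (by simpa using hj)).le
  have hsum : ∑ j, g j * f (x j) = 0 := by
    simpa [map_sum, map_smul] using congrArg f hg
  intro j
  have hterm_zero := (Finset.sum_eq_zero_iff_of_nonneg fun j _ => hterm_nonneg j).mp hsum j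
    (Finset.mem_univ j)
  have hfx : f (x j) ≠ 0 := by
    by_cases hj : 0 < g j
    · exact (hf_pos j (by simpa using hj)).ne'
    · exact (hf_neg j (by simpa using hj)).ne
  exact (mul_eq_zero.mp hterm_zero).resolve_right hfx

theorem linearIndependent_of_separating_vectors_general {V : Type*}
    [NormedAddCommGroup V] [InnerProductSpace ℝ V]
    (m : ℕ)
    (w : Finset (Fin m) → V)
    (hw_neg : ∀ I, w Iᶜ = -(w I))
    (x : Fin m → V)
    (hx : ∀ (i : Fin m) (I : Finset (Fin m)), i ∈ I → 0 < ⟪x i, w I⟫) :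
    LinearIndependent ℝ x := by
  refine .of_forall_exists_sign_pattern x fun I => ⟨innerₗ V (w I), fun i hi => ?_, fun i hi => ?_⟩
  · simpa [real_inner_comm] using hx i I hi
  · have hneg := hx i Iᶜ (Finset.mem_compl.mpr hi)
    rw [hw_neg, inner_neg_right] at hneg
    simpa [real_inner_comm] using hneg

theorem linearIndependent_of_separating_vectors {V : Type*}
    [NormedAddCommGroup V] [InnerProductSpace ℝ V]
    (m : ℕ) (hm : 1 ≤ m)
    (w : Finset (Fin m) → V)
    (hw_unit : ∀ I, ‖w I‖ = 1)
    (hw_neg : ∀ I, w Iᶜ = -(w I))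
    (x : Fin m → V)
    (hx : ∀ (i : Fin m) (I : Finset (Fin m)), i ∈ I → 0 < ⟪x i, w I⟫) :
    LinearIndependent ℝ x :=
  linearIndependent_of_separating_vectors_general m w hw_neg x hx
end

section
/- Let m ≥ 1, let V = ℝ^{m+1} with its standard inner product, and let e₀, e₁, …, e_m be an orthonormal basis of V. Let U be the hyperplane of V orthogonal to e₀ (the span of e₁, …, e_m). Then for every unit vector u ∈ U there exists an index i ∈ {1, …, m} and a sign ε ∈ {+1, −1} such that: for every unit vector x ∈ V with ⟨x, eᵢ⟩ > √((m−1)/m), one has ⟨x, ε·u⟩ > 0. (In particular, some coordinate of u satisfies |⟨u, eᵢ⟩| ≥ 1/√m, and any unit vectors x, u with ⟨x, eᵢ⟩ > √((m−1)/m) and ⟨u, eᵢ⟩ ≥ 1/√m satisfy ⟨x, u⟩ > 0.) -/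
/-!
Pick a coordinate `i ≠ 0` carrying at least the average share `1/m` of `‖u‖² = 1`, and flip the
sign of `u` so that `v = ε u` has `⟪v, eᵢ⟫ = |uᵢ| ≥ 1/√m`. For a unit vector `x` with
`⟪x, eᵢ⟫ > √((m-1)/m)` the angles from `x` and from `v` to `eᵢ` then sum to less than `π/2`,
so `⟪x, v⟫ > 0`.
-/

open scoped RealInnerProductSpace

open Finset in
theorem EuclideanSpace.exists_inv_card_le_sq {ι : Type*} [Fintype ι]
    {u : EuclideanSpace ℝ ι} (hu : ‖u‖ = 1) {s : Finset ι} (hs : ∀ j ∉ s, u j = 0) :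
    ∃ i ∈ s, (#s : ℝ)⁻¹ ≤ u i ^ 2 := by
  have hsum : ∑ j ∈ s, u j ^ 2 = 1 := by
    rw [sum_subset (subset_univ s) fun j _ hj ↦ by simp [hs j hj],
      ← EuclideanSpace.real_norm_sq_eq, hu, one_pow]
  have hne : s.Nonempty := nonempty_of_sum_ne_zero (hsum ▸ one_ne_zero)
  refine exists_le_of_sum_le hne ?_
  rw [hsum, sum_const, nsmul_eq_mul, mul_inv_cancel₀ (by simpa using hne.ne_empty)]

/-- Write `x = a e + x'`, `v = b e + v'` with `x', v' ⟂ e`; then `⟪x, v⟫ = a b + ⟪x', v'⟫` and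
`|⟪x', v'⟫| ≤ √(1 - a²) √(1 - b²) < a b` exactly when `a² + b² > 1`. -/
theorem real_inner_pos_of_one_lt_sq_add_sq {E : Type*} [NormedAddCommGroup E]
    [InnerProductSpace ℝ E] {x v e : E} (hx : ‖x‖ = 1) (hv : ‖v‖ = 1) (he : ‖e‖ = 1)
    (ha : 0 ≤ ⟪x, e⟫) (hb : 0 ≤ ⟪v, e⟫) (h : 1 < ⟪x, e⟫ ^ 2 + ⟪v, e⟫ ^ 2) :
    0 < ⟪x, v⟫ := by
  set a := ⟪x, e⟫
  set b := ⟪v, e⟫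
  have norm_sq_sub {y : E} (hy : ‖y‖ = 1) : ‖y - ⟪y, e⟫ • e‖ ^ 2 = 1 - ⟪y, e⟫ ^ 2 := by
    rw [norm_sub_sq_real, real_inner_smul_right, norm_smul, mul_pow, Real.norm_eq_abs, sq_abs,
      hy, he]
    ring
  have hdecomp : ⟪x, v⟫ = a * b + ⟪x - a • e, v - b • e⟫ := by
    simp only [inner_sub_left, inner_sub_right, real_inner_smul_left, real_inner_smul_right,
      real_inner_self_eq_norm_sq, he, real_inner_comm v e]
    ring
  have hproj : ‖x - a • e‖ * ‖v - b • e‖ < a * b := by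
    refine lt_of_pow_lt_pow_left₀ 2 (mul_nonneg ha hb) ?_
    rw [mul_pow, mul_pow, norm_sq_sub hx, norm_sq_sub hv]
    nlinarith
  linarith [neg_le_of_abs_le (abs_real_inner_le_norm (x - a • e) (v - b • e))]

open Finset in
theorem hyperplane_separation_example_general (m : ℕ)
    (u : EuclideanSpace ℝ (Fin (m + 1)))
    (hu_mem : ⟪u, EuclideanSpace.single (0 : Fin (m + 1)) (1 : ℝ)⟫ = 0)
    (hu_norm : ‖u‖ = 1) :
    ∃ i : Fin (m + 1), i ≠ 0 ∧ ∃ ε : ℝ, (ε = 1 ∨ ε = -1) ∧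
      ∀ x : EuclideanSpace ℝ (Fin (m + 1)), ‖x‖ = 1 →
        Real.sqrt (((m : ℝ) - 1) / m) < ⟪x, EuclideanSpace.single i (1 : ℝ)⟫ →
        0 < ⟪x, ε • u⟫ := by
  have hu0 : ∀ j ∉ univ.erase 0, u j = 0 := fun j hj ↦ by
    simpa [show j = 0 by simpa using hj, EuclideanSpace.inner_single_right] using hu_mem
  obtain ⟨i, hi, hui⟩ := EuclideanSpace.exists_inv_card_le_sq hu_norm hu0
  have hi0 : i ≠ 0 := ne_of_mem_erase hi
  have hm : m ≠ 0 := by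
    rintro rfl
    exact hi0 (Fin.fin_one_eq_zero i)
  simp only [card_erase_of_mem (mem_univ _), card_univ, Fintype.card_fin,
    add_tsub_cancel_right] at hui
  have hui0 : u i ≠ 0 := fun h ↦ by simp [h, hm] at hui
  refine ⟨i, hi0, SignType.sign (u i), ?_, fun x hx hxi ↦ ?_⟩
  · rcases hui0.lt_or_gt with h | h <;> simp [h]
  have hxe : ⟪x, EuclideanSpace.single i 1⟫ = x i := by simp [EuclideanSpace.inner_single_right]
  have hve : ⟪(SignType.sign (u i) : ℝ) • u, EuclideanSpace.single i 1⟫ = |u i| := by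
    simp [EuclideanSpace.inner_single_right, sign_mul_self]
  rw [hxe] at hxi
  refine real_inner_pos_of_one_lt_sq_add_sq (e := EuclideanSpace.single i 1) hx ?_ (by simp)
    (hxe ▸ (Real.sqrt_nonneg _).trans hxi.le) (hve ▸ abs_nonneg _) ?_
  · rcases hui0.lt_or_gt with h | h <;> simp [h, hu_norm]
  · have hthreshold : ((m : ℝ) - 1) / m + (m : ℝ)⁻¹ = 1 := by field_simp; ring
    rw [hxe, hve, sq_abs]
    linarith [Real.lt_sq_of_sqrt_lt hxi]

theorem hyperplane_separation_example (m : ℕ) (hm : 1 ≤ m)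
    (u : EuclideanSpace ℝ (Fin (m + 1)))
    (hu_mem : ⟪u, EuclideanSpace.single (0 : Fin (m + 1)) (1 : ℝ)⟫ = 0)
    (hu_norm : ‖u‖ = 1) :
    ∃ i : Fin (m + 1), i ≠ 0 ∧ ∃ ε : ℝ, (ε = 1 ∨ ε = -1) ∧
      ∀ x : EuclideanSpace ℝ (Fin (m + 1)), ‖x‖ = 1 →
        Real.sqrt (((m : ℝ) - 1) / m) < ⟪x, EuclideanSpace.single i (1 : ℝ)⟫ →
        0 < ⟪x, ε • u⟫ :=
  hyperplane_separation_example_general m u hu_mem hu_norm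
end
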